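/- arXiv:1709.03374 — 6 statements merged into one kernel-verified Lean document; each statement's English description precedes it below -/
import Mathlib

section
/- The piecewise constant function f defined by f(t) = ((α+β₁)/α)·(μ/Λ) on [−β₂Λ/((β₁+β₂)μ), −(β₁/(α+β₁))·β₂Λ/((β₁+β₂)μ)], f(t) = ((α+β₁)/(α+β₂))·(μ/Λ) on (−(β₁/(α+β₁))·β₂Λ/((β₁+β₂)μ), 0], and f(t) = (α/(α+β₂))·(μ/Λ) on (0, β₁Λ/((β₁+β₂)μ)], with f = 0 elsewhere, integrates to 1 over ℝ. -/
open MeasureTheory Set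

/-! The density is constant on three adjacent intervals, so its integral is the sum of the three
rectangle areas. With `L = β₂Λ/((β₁+β₂)μ)` these are `β₂/(β₁+β₂)` on the first interval, of
length `αL/(α+β₁)`, and `β₁β₂/((α+β₂)(β₁+β₂))` and `αβ₁/((α+β₂)(β₁+β₂))` on the other two; the last
two add up to `β₁/(β₁+β₂)`. -/

section ThreeStep

variable {a b c d : ℝ} (y₁ y₂ y₃ : ℝ)

noncomputable def threeStep (a b c d : ℝ) (t : ℝ) : ℝ :=
  if a ≤ t ∧ t ≤ b then y₁
  else if b < t ∧ t ≤ c then y₂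
  else if c < t ∧ t ≤ d then y₃
  else 0

theorem threeStep_eq_indicator_add (hbc : b ≤ c) :
    threeStep y₁ y₂ y₃ a b c d =
      (Icc a b).indicator (fun _ ↦ y₁) + (Ioc b c).indicator (fun _ ↦ y₂) +
        (Ioc c d).indicator (fun _ ↦ y₃) := by
  funext t
  simp only [threeStep, Pi.add_apply, indicator_apply, mem_Icc, mem_Ioc]
  split_ifs <;> grind

theorem integral_threeStep (hab : a ≤ b) (hbc : b ≤ c) (hcd : c ≤ d) :
    ∫ t, threeStep y₁ y₂ y₃ a b c d t = y₁ * (b - a) + y₂ * (c - b) + y₃ * (d - c) := by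
  have h₁ : Integrable ((Icc a b).indicator fun _ ↦ y₁) :=
    (integrableOn_const measure_Icc_lt_top.ne).integrable_indicator measurableSet_Icc
  have h₂ : Integrable ((Ioc b c).indicator fun _ ↦ y₂) :=
    (integrableOn_const measure_Ioc_lt_top.ne).integrable_indicator measurableSet_Ioc
  have h₃ : Integrable ((Ioc c d).indicator fun _ ↦ y₃) :=
    (integrableOn_const measure_Ioc_lt_top.ne).integrable_indicator measurableSet_Ioc
  rw [threeStep_eq_indicator_add y₁ y₂ y₃ hbc, integral_add' (h₁.add h₂) h₃, integral_add' h₁ h₂,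
    integral_indicator_const _ measurableSet_Icc, integral_indicator_const _ measurableSet_Ioc,
    integral_indicator_const _ measurableSet_Ioc, Real.volume_real_Icc_of_le hab,
    Real.volume_real_Ioc_of_le hbc, Real.volume_real_Ioc_of_le hcd]
  simp only [smul_eq_mul]
  ring

end ThreeStep

/-- The three-step equilibrium density of the unconstrained fluid model integrates to 1. -/
theorem equilibrium_density_integrates_to_one
    (α β₁ β₂ μ Λ : ℝ) (hα : 0 < α) (hβ₁ : 0 < β₁) (hβ₂ : 0 < β₂) (hμ : 0 < μ) (hΛ : 0 < Λ)
    (f : ℝ → ℝ)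
    (hf : ∀ t : ℝ, f t =
      if -(β₂ * Λ / ((β₁ + β₂) * μ)) ≤ t ∧ t ≤ -(β₁ / (α + β₁)) * (β₂ * Λ / ((β₁ + β₂) * μ)) then
        ((α + β₁) / α) * (μ / Λ)
      else if -(β₁ / (α + β₁)) * (β₂ * Λ / ((β₁ + β₂) * μ)) < t ∧ t ≤ 0 then
        ((α + β₁) / (α + β₂)) * (μ / Λ)
      else if 0 < t ∧ t ≤ β₁ * Λ / ((β₁ + β₂) * μ) then
        (α / (α + β₂)) * (μ / Λ)
      else 0) :
    ∫ t : ℝ, f t = 1 := by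
  set L := β₂ * Λ / ((β₁ + β₂) * μ)
  have hL : 0 < L := by positivity
  have hp : β₁ / (α + β₁) ≤ 1 := (div_le_one (by positivity)).2 (by linarith)
  have hab : -L ≤ -(β₁ / (α + β₁)) * L := by nlinarith
  have hb0 : -(β₁ / (α + β₁)) * L ≤ 0 := by nlinarith [div_nonneg hβ₁.le (add_pos hα hβ₁).le]
  have hf_eq : f = threeStep _ _ _ _ _ _ _ := funext hf
  rw [hf_eq, integral_threeStep _ _ _ hab hb0 (by positivity)]
  simp only [L]
  field_simp
  ring
end

section
/- Let α, β₁, β₂, μ, Λ > 0 and let F be the cumulative arrival distribution of the unconstrained fluid equilibrium, i.e., F(t) = ∫_{−∞}^t f(s) ds with f the three-step equilibrium density. Then the cost function C(t) of a drop arriving at t is constant and equal to β₁·β₂Λ/((β₁+β₂)μ) for all t in the support [−β₂Λ/((β₁+β₂)μ), β₁Λ/((β₁+β₂)μ)], where C(t) = α(ΛF(t) − μ(t+T_{e1}))/μ − β₁t on the first segment, C(t) = α(ΛF(t) − μ(t+T_{e1}))/μ − β₁t + β₂((ΛF(t) − μ(t+T_{e1}))/μ + t) on the second, and C(t) = β₂t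 + (β₂+α)(ΛF(t) − μ(t+T_{e1}))/μ on the third, with T_{e1} = β₂Λ/((β₁+β₂)μ). -/
/-!
The equilibrium density is a step function, so `F` is piecewise affine and the workload
`ΛF(t) − μ(t + T_{e1})` can be written down explicitly on each segment. On each segment the
density is exactly the one that makes the slope of the cost zero, the formulas for the cost agree
at the breakpoints, and at `t = −T_{e1}` the queue is empty, so the cost there is `β₁ T_{e1}`.
-/

open MeasureTheory Set

noncomputable def threeStepDensity (a b d c₁ c₂ c₃ : ℝ) (s : ℝ) : ℝ :=
  if a ≤ s ∧ s ≤ b then c₁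
  else if b < s ∧ s ≤ 0 then c₂
  else if 0 < s ∧ s ≤ d then c₃
  else 0

section ThreeStep

variable {a b d : ℝ} {c₁ c₂ c₃ : ℝ}

theorem threeStepDensity_eq_indicator (hb : b ≤ 0) :
    threeStepDensity a b d c₁ c₂ c₃ =
      (Icc a b).indicator (fun _ ↦ c₁) + (Ioc b 0).indicator (fun _ ↦ c₂)
        + (Ioc 0 d).indicator (fun _ ↦ c₃) := by
  ext s
  simp only [threeStepDensity, Pi.add_apply, indicator_apply, mem_Icc, mem_Ioc]
  split_ifs <;> grind

theorem integrableOn_Iic_indicator_const {s : Set ℝ} (hs : MeasurableSet s)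
    (hfin : volume s ≠ ⊤) (c t : ℝ) : IntegrableOn (s.indicator fun _ ↦ c) (Iic t) :=
  ((integrableOn_const hfin).integrable_indicator hs).integrableOn

theorem integral_Iic_indicator_const {s : Set ℝ} (hs : MeasurableSet s) (c t : ℝ) :
    ∫ x in Iic t, s.indicator (fun _ ↦ c) x = volume.real (s ∩ Iic t) * c := by
  rw [integral_indicator_const _ hs, measureReal_restrict_apply hs, smul_eq_mul]

theorem integral_Iic_threeStepDensity (hb : b ≤ 0) (t : ℝ) :
    ∫ s in Iic t, threeStepDensity a b d c₁ c₂ c₃ s =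
      c₁ * max (min b t - a) 0 + c₂ * max (min 0 t - b) 0 + c₃ * max (min d t) 0 := by
  have h₁ := integrableOn_Iic_indicator_const (measurableSet_Icc (a := a) (b := b))
    measure_Icc_lt_top.ne c₁ t
  have h₂ := integrableOn_Iic_indicator_const (measurableSet_Ioc (a := b) (b := 0))
    measure_Ioc_lt_top.ne c₂ t
  have h₃ := integrableOn_Iic_indicator_const (measurableSet_Ioc (a := 0) (b := d))
    measure_Ioc_lt_top.ne c₃ t
  rw [threeStepDensity_eq_indicator hb, integral_add' (h₁.add h₂) h₃, integral_add' h₁ h₂,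
    integral_Iic_indicator_const measurableSet_Icc, integral_Iic_indicator_const measurableSet_Ioc,
    integral_Iic_indicator_const measurableSet_Ioc, ← Ici_inter_Iic, inter_assoc, Iic_inter_Iic,
    Ici_inter_Iic, Ioc_inter_Iic, Ioc_inter_Iic, Real.volume_real_Icc, Real.volume_real_Ioc,
    Real.volume_real_Ioc, sub_zero]
  ring

theorem integral_Iic_threeStepDensity_of_mem_Icc_a_b (hb : b ≤ 0) {t : ℝ} (ht : t ∈ Icc a b) :
    ∫ s in Iic t, threeStepDensity a b d c₁ c₂ c₃ s = c₁ * (t - a) := by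
  obtain ⟨hat, htb⟩ := ht
  rw [integral_Iic_threeStepDensity hb, min_eq_right htb, min_eq_right (htb.trans hb),
    max_eq_left (sub_nonneg.2 hat), max_eq_right (sub_nonpos.2 htb),
    max_eq_right ((min_le_right d t).trans (htb.trans hb))]
  ring

theorem integral_Iic_threeStepDensity_of_mem_Icc_b_zero (hab : a ≤ b) {t : ℝ}
    (ht : t ∈ Icc b 0) :
    ∫ s in Iic t, threeStepDensity a b d c₁ c₂ c₃ s = c₁ * (b - a) + c₂ * (t - b) := by
  obtain ⟨hbt, ht0⟩ := ht
  rw [integral_Iic_threeStepDensity (hbt.trans ht0), min_eq_left hbt, min_eq_right ht0,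
    max_eq_left (sub_nonneg.2 hab), max_eq_left (sub_nonneg.2 hbt),
    max_eq_right ((min_le_right d t).trans ht0)]
  ring

theorem integral_Iic_threeStepDensity_of_mem_Icc_zero_d (hab : a ≤ b) (hb : b ≤ 0) {t : ℝ}
    (ht : t ∈ Icc 0 d) :
    ∫ s in Iic t, threeStepDensity a b d c₁ c₂ c₃ s = c₁ * (b - a) - c₂ * b + c₃ * t := by
  obtain ⟨h0t, htd⟩ := ht
  rw [integral_Iic_threeStepDensity hb, min_eq_left (hb.trans h0t), min_eq_left h0t,
    min_eq_right htd, max_eq_left (sub_nonneg.2 hab), max_eq_left (sub_nonneg.2 hb), max_eq_left h0t]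
  ring

end ThreeStep

/-- In the unconstrained fluid equilibrium, the cost of a drop arriving at any time `t` in the
support is constant, equal to `β₁β₂Λ/((β₁+β₂)μ)`, where the cost is given by the appropriate
piecewise formula on each of the three segments. -/
theorem equilibrium_cost_constant_on_support
    (α β₁ β₂ μ Λ : ℝ) (hα : 0 < α) (hβ₁ : 0 < β₁) (hβ₂ : 0 < β₂) (hμ : 0 < μ) (hΛ : 0 < Λ)
    (f : ℝ → ℝ)
    (hf : ∀ t : ℝ, f t =
      if -(β₂ * Λ / ((β₁ + β₂) * μ)) ≤ t ∧ t ≤ -(β₁ / (α + β₁)) * (β₂ * Λ / ((β₁ + β₂) * μ)) then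
        ((α + β₁) / α) * (μ / Λ)
      else if -(β₁ / (α + β₁)) * (β₂ * Λ / ((β₁ + β₂) * μ)) < t ∧ t ≤ 0 then
        ((α + β₁) / (α + β₂)) * (μ / Λ)
      else if 0 < t ∧ t ≤ β₁ * Λ / ((β₁ + β₂) * μ) then
        (α / (α + β₂)) * (μ / Λ)
      else 0)
    (F : ℝ → ℝ) (hF : ∀ t : ℝ, F t = ∫ s in Set.Iic t, f s) :
    let Te₁ : ℝ := β₂ * Λ / ((β₁ + β₂) * μ)
    (∀ t : ℝ, -Te₁ ≤ t → t ≤ -(β₁ / (α + β₁)) * Te₁ →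
      α * (Λ * F t - μ * (t + Te₁)) / μ - β₁ * t = β₁ * (β₂ * Λ / ((β₁ + β₂) * μ))) ∧
    (∀ t : ℝ, -(β₁ / (α + β₁)) * Te₁ ≤ t → t ≤ 0 →
      α * (Λ * F t - μ * (t + Te₁)) / μ - β₁ * t
        + β₂ * ((Λ * F t - μ * (t + Te₁)) / μ + t) = β₁ * (β₂ * Λ / ((β₁ + β₂) * μ))) ∧
    (∀ t : ℝ, 0 ≤ t → t ≤ β₁ * Λ / ((β₁ + β₂) * μ) →
      β₂ * t + (β₂ + α) * ((Λ * F t - μ * (t + Te₁)) / μ) = β₁ * (β₂ * Λ / ((β₁ + β₂) * μ))) := by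
  intro Te₁
  have hTe₁ : 0 < Te₁ := by positivity
  have hρ : β₁ / (α + β₁) ≤ 1 := (div_le_one (by positivity)).2 (by linarith)
  have hab : -Te₁ ≤ -(β₁ / (α + β₁)) * Te₁ := by nlinarith
  have hb : -(β₁ / (α + β₁)) * Te₁ ≤ 0 :=
    mul_nonpos_of_nonpos_of_nonneg (neg_nonpos.2 (by positivity)) hTe₁.le
  have hF' : ∀ t, F t = ∫ s in Iic t, threeStepDensity (-Te₁) (-(β₁ / (α + β₁)) * Te₁)
      (β₁ * Λ / ((β₁ + β₂) * μ)) ((α + β₁) / α * (μ / Λ)) ((α + β₁) / (α + β₂) * (μ / Λ))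
      (α / (α + β₂) * (μ / Λ)) s := fun t ↦ by
    rw [hF t, funext hf]; rfl
  refine ⟨fun t h₁ h₂ ↦ ?_, fun t h₁ h₂ ↦ ?_, fun t h₁ h₂ ↦ ?_⟩
  · rw [hF', integral_Iic_threeStepDensity_of_mem_Icc_a_b hb ⟨h₁, h₂⟩]
    simp only [Te₁]
    field_simp
    ring
  · rw [hF', integral_Iic_threeStepDensity_of_mem_Icc_b_zero hab ⟨h₁, h₂⟩]
    simp only [Te₁]
    field_simp
    ring
  · rw [hF', integral_Iic_threeStepDensity_of_mem_Icc_zero_d hab hb ⟨h₁, h₂⟩]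
    simp only [Te₁]
    field_simp
    ring
end

section
/- Let α, β₂, λ, μ, T₁ > 0 and p ∈ (0,1]. Define g₂(p) = β₁T₁ + αλp/(2μ) + β₂ Σ_{i=1}^∞ (e^{−λp}(λp)^i/i!) · (1/i) Σ_{k=1}^i E[(Σ_{j=1}^k X_j − T₁)^+], where X_j are i.i.d. Exp(μ). Then g₂(p) is well-defined (the double series converges absolutely) and is continuous and strictly increasing in p. -/
/-!
The tardiness term is a Poisson mixture `∑ᵢ Po(λp){i} cᵢ` of the Cesàro means `cᵢ` of the
expected excesses `a_k = E[(X₁ + ⋯ + X_k − T₁)⁺]`. As the `X_j` are nonnegative, `a_k` is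
nondecreasing with `a_k ≤ k E[X₁]`, so the `cᵢ` are nondecreasing and grow at most linearly.
This growth bound makes the mixture converge locally uniformly in the rate, so it is continuous;
and since `Po(x + z)` is the law of a sum of independent `Po(x)` and `Po(z)` variables, mixing a
nondecreasing sequence gives a nondecreasing function of the rate. The linear term `αλp/(2μ)`
then makes `g₂` strictly increasing.
-/

open MeasureTheory ProbabilityTheory Finset

noncomputable def poissonWeight (x : ℝ) (i : ℕ) : ℝ := Real.exp (-x) * x ^ i / (i.factorial : ℝ)

lemma poissonWeight_nonneg {x : ℝ} (hx : 0 ≤ x) (i : ℕ) : 0 ≤ poissonWeight x i := by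
  unfold poissonWeight; positivity

lemma hasSum_poissonWeight (x : ℝ) : HasSum (poissonWeight x) 1 := by
  convert! (NormedSpace.expSeries_div_hasSum_exp x).mul_left (Real.exp (-x)) using 1
  · funext i; exact mul_div_assoc _ _ _
  · simp [← Real.exp_eq_exp_ℝ, ← Real.exp_add]

lemma sum_antidiagonal_poissonWeight_mul (x z : ℝ) (n : ℕ) :
    ∑ m ∈ antidiagonal n, poissonWeight x m.1 * poissonWeight z m.2 = poissonWeight (x + z) n := by
  simp only [poissonWeight, (Commute.all x z).add_pow', mul_sum, sum_div]
  refine sum_congr rfl fun m hm => ?_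
  rw [← mem_antidiagonal.mp hm, nsmul_eq_mul, Nat.cast_add_choose, neg_add, Real.exp_add]
  field_simp

lemma norm_poissonWeight_mul_le {c : ℕ → ℝ} {C R : ℝ} (hc : ∀ i, |c i| ≤ C * R ^ i)
    (x : ℝ) (i : ℕ) :
    ‖poissonWeight x i * c i‖ ≤ Real.exp (-x) * |C| * ((|x| * |R|) ^ i / (i.factorial : ℝ)) := by
  have hcR : |c i| ≤ |C| * |R| ^ i := by
    simpa [abs_mul, abs_pow] using (hc i).trans (le_abs_self _)
  rw [Real.norm_eq_abs, abs_mul, poissonWeight, abs_div, abs_mul, Real.abs_exp, abs_pow,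
    Nat.abs_cast]
  calc Real.exp (-x) * |x| ^ i / (i.factorial : ℝ) * |c i|
      ≤ Real.exp (-x) * |x| ^ i / (i.factorial : ℝ) * (|C| * |R| ^ i) := by gcongr
    _ = _ := by rw [mul_pow]; ring

lemma summable_norm_poissonWeight_mul {c : ℕ → ℝ} {C R : ℝ} (hc : ∀ i, |c i| ≤ C * R ^ i)
    (x : ℝ) : Summable fun i => ‖poissonWeight x i * c i‖ :=
  Summable.of_nonneg_of_le (fun _ => norm_nonneg _) (norm_poissonWeight_mul_le hc x)
    ((Real.summable_pow_div_factorial _).mul_left _)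

lemma continuous_tsum_poissonWeight_mul {c : ℕ → ℝ} {C R : ℝ} (hc : ∀ i, |c i| ≤ C * R ^ i) :
    Continuous fun x => ∑' i, poissonWeight x i * c i := by
  refine continuous_iff_continuousAt.mpr fun x₀ => ?_
  set B := |x₀| + 1
  have hB : Set.Icc (-B) B ∈ nhds x₀ :=
    Icc_mem_nhds (by linarith [neg_abs_le x₀]) (by linarith [le_abs_self x₀])
  refine (continuousOn_tsum (fun i => by unfold poissonWeight; fun_prop)
    ((Real.summable_pow_div_factorial (B * |R|)).mul_left (Real.exp B * |C|))
    fun i x hx => ?_).continuousAt hB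
  have hxB : |x| ≤ B := abs_le.mpr hx
  refine (norm_poissonWeight_mul_le hc x i).trans ?_
  gcongr
  linarith [neg_abs_le x]

lemma monotoneOn_tsum_poissonWeight_mul {c : ℕ → ℝ} {C R : ℝ} (hcm : Monotone c)
    (hc : ∀ i, |c i| ≤ C * R ^ i) :
    MonotoneOn (fun x => ∑' i, poissonWeight x i * c i) (Set.Ici 0) := by
  intro x hx y _ hxy
  obtain ⟨z, hz, rfl⟩ : ∃ z, 0 ≤ z ∧ y = x + z := ⟨y - x, sub_nonneg.mpr hxy, by ring⟩
  have hw : Summable fun j => ‖poissonWeight z j‖ := by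
    simpa using summable_norm_poissonWeight_mul (c := 1) (C := 1) (R := 1) (by simp) z
  calc ∑' i, poissonWeight x i * c i
      = (∑' i, poissonWeight x i * c i) * ∑' j, poissonWeight z j := by
        rw [(hasSum_poissonWeight z).tsum_eq, mul_one]
    _ = ∑' n, ∑ m ∈ antidiagonal n, poissonWeight x m.1 * c m.1 * poissonWeight z m.2 :=
        tsum_mul_tsum_eq_tsum_sum_antidiagonal_of_summable_norm
          (summable_norm_poissonWeight_mul hc x) hw
    _ ≤ ∑' n, poissonWeight (x + z) n * c n := by
        refine Summable.tsum_le_tsum (fun n => ?_)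
          (summable_norm_sum_mul_antidiagonal_of_summable_norm
            (summable_norm_poissonWeight_mul hc x) hw).of_norm
          (summable_norm_poissonWeight_mul hc (x + z)).of_norm
        rw [← sum_antidiagonal_poissonWeight_mul, sum_mul]
        refine sum_le_sum fun m hm => ?_
        have hmn : m.1 ≤ n := HasAntidiagonal.antidiagonal.fst_le hm
        have hwx := poissonWeight_nonneg hx m.1
        have hwz := poissonWeight_nonneg hz m.2
        calc poissonWeight x m.1 * c m.1 * poissonWeight z m.2
            = poissonWeight x m.1 * poissonWeight z m.2 * c m.1 := by ring
          _ ≤ poissonWeight x m.1 * poissonWeight z m.2 * c n := by gcongr; exact hcm hmn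

-- At `i = 0` the junk value `1 / 0 = 0` makes the mean `0`, so sums over `i` may start at `0`.
noncomputable def cesaroMean (a : ℕ → ℝ) (i : ℕ) : ℝ := 1 / (i : ℝ) * ∑ k ∈ Icc 1 i, a k

lemma natCast_mul_cesaroMean (a : ℕ → ℝ) (i : ℕ) :
    (i : ℝ) * cesaroMean a i = ∑ k ∈ Icc 1 i, a k := by
  rcases Nat.eq_zero_or_pos i with rfl | hi
  · simp
  · rw [cesaroMean, ← mul_assoc, mul_one_div_cancel (by positivity), one_mul]

lemma cesaroMean_nonneg {a : ℕ → ℝ} (ha : ∀ k, 0 ≤ a k) (i : ℕ) : 0 ≤ cesaroMean a i :=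
  mul_nonneg (by positivity) (sum_nonneg fun k _ => ha k)

lemma cesaroMean_le_of_monotone {a : ℕ → ℝ} (ha : Monotone a) (ha0 : 0 ≤ a 0) (i : ℕ) :
    cesaroMean a i ≤ a i := by
  rcases Nat.eq_zero_or_pos i with rfl | hi
  · simpa [cesaroMean] using ha0
  refine le_of_mul_le_mul_left ?_ (Nat.cast_pos.mpr hi)
  calc (i : ℝ) * cesaroMean a i = ∑ k ∈ Icc 1 i, a k := natCast_mul_cesaroMean a i
    _ ≤ ∑ _k ∈ Icc 1 i, a i := sum_le_sum fun k hk => ha (mem_Icc.mp hk).2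
    _ = i * a i := by simp

lemma monotone_cesaroMean {a : ℕ → ℝ} (ha : Monotone a) (ha0 : 0 ≤ a 0) :
    Monotone (cesaroMean a) := by
  refine monotone_nat_of_le_succ fun i => le_of_mul_le_mul_left ?_ (Nat.cast_add_one_pos i)
  have hsucc : ((i + 1 : ℕ) : ℝ) * cesaroMean a (i + 1) = i * cesaroMean a i + a (i + 1) := by
    rw [natCast_mul_cesaroMean, natCast_mul_cesaroMean, sum_Icc_succ_top (by omega)]
  have hle := (cesaroMean_le_of_monotone ha ha0 i).trans (ha i.le_succ)
  push_cast at hsucc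
  linarith

lemma ae_nonneg_of_map_eq_expMeasure {Ω : Type*} [MeasurableSpace Ω] {P : Measure Ω}
    {Y : Ω → ℝ} {r : ℝ} (hY : AEMeasurable Y P) (h : P.map Y = expMeasure r) : 0 ≤ᵐ[P] Y := by
  have hexp : ∀ᵐ y ∂P.map Y, 0 ≤ y := by
    rw [h, ae_iff]
    simp only [not_le]
    show volume.withDensity (exponentialPDF r) (Set.Iio 0) = 0
    rw [withDensity_apply _ measurableSet_Iio]
    exact lintegral_exponentialPDF_of_nonpos le_rfl
  exact ae_of_ae_map hY hexp

lemma integrable_id_expMeasure {r : ℝ} (hr : 0 < r) : Integrable id (expMeasure r) := by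
  have hdens : ∀ x, (exponentialPDF r x).toReal • x =
      (Set.Ici 0).indicator (fun x => r * (x ^ (1 : ℝ) * Real.exp (-r * x ^ (1 : ℝ)))) x := by
    intro x
    rcases lt_or_ge x 0 with hx | hx
    · simp [exponentialPDF_of_neg hx, hx]
    · rw [exponentialPDF_of_nonneg hx, ENNReal.toReal_ofReal (by positivity),
        Set.indicator_of_mem (Set.mem_Ici.mpr hx), Real.rpow_one, smul_eq_mul]
      ring_nf
  rw [show expMeasure r = volume.withDensity (exponentialPDF r) from rfl,
    integrable_withDensity_iff_integrable_smul' (f := exponentialPDF r)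
      (measurable_exponentialPDFReal r).ennreal_ofReal (.of_forall fun _ => ENNReal.ofReal_lt_top)]
  simp_rw [id, hdens]
  rw [integrable_indicator_iff measurableSet_Ici, integrableOn_Ici_iff_integrableOn_Ioi]
  exact (integrableOn_rpow_mul_exp_neg_mul_rpow (by norm_num) one_pos hr).const_mul r

lemma integrable_of_map_eq_expMeasure {Ω : Type*} [MeasurableSpace Ω] {P : Measure Ω}
    {Y : Ω → ℝ} {r : ℝ} (hr : 0 < r) (hY : AEMeasurable Y P) (h : P.map Y = expMeasure r) :
    Integrable Y P :=
  (integrable_map_measure aestronglyMeasurable_id hY).mp (h ▸ integrable_id_expMeasure hr)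

section ExpectedExcess

variable {Ω : Type*} [MeasurableSpace Ω] {P : Measure Ω} {X : ℕ → Ω → ℝ} {T : ℝ}

lemma ae_max_sum_sub_le_sum (hX0 : ∀ j, 0 ≤ᵐ[P] X j) (hT : 0 ≤ T) (k : ℕ) :
    ∀ᵐ ω ∂P, max (∑ j ∈ range k, X j ω - T) 0 ≤ ∑ j ∈ range k, X j ω := by
  filter_upwards [ae_all_iff.mpr hX0] with ω hω
  exact max_le (by linarith) (sum_nonneg fun j _ => hω j)

lemma integrable_max_sum_sub (hX0 : ∀ j, 0 ≤ᵐ[P] X j) (hXi : ∀ j, Integrable (X j) P)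
    (hT : 0 ≤ T) (k : ℕ) : Integrable (fun ω => max (∑ j ∈ range k, X j ω - T) 0) P := by
  have hS : Integrable (fun ω => ∑ j ∈ range k, X j ω) P := integrable_finsetSum _ fun j _ => hXi j
  refine hS.mono' ((hS.aestronglyMeasurable.sub aestronglyMeasurable_const).sup
    aestronglyMeasurable_const) ?_
  filter_upwards [ae_max_sum_sub_le_sum hX0 hT k] with ω hω
  rwa [Real.norm_of_nonneg (le_max_right _ _)]

lemma integral_max_sum_sub_le (hX0 : ∀ j, 0 ≤ᵐ[P] X j) (hXi : ∀ j, Integrable (X j) P)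
    (hT : 0 ≤ T) (k : ℕ) :
    ∫ ω, max (∑ j ∈ range k, X j ω - T) 0 ∂P ≤ ∑ j ∈ range k, ∫ ω, X j ω ∂P := by
  rw [← integral_finsetSum _ fun j _ => hXi j]
  exact integral_mono_ae (integrable_max_sum_sub hX0 hXi hT k)
    (integrable_finsetSum _ fun j _ => hXi j) (ae_max_sum_sub_le_sum hX0 hT k)

lemma monotone_integral_max_sum_sub (hX0 : ∀ j, 0 ≤ᵐ[P] X j) (hXi : ∀ j, Integrable (X j) P)
    (hT : 0 ≤ T) : Monotone fun k => ∫ ω, max (∑ j ∈ range k, X j ω - T) 0 ∂P := by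
  intro k l hkl
  refine integral_mono_ae (integrable_max_sum_sub hX0 hXi hT k)
    (integrable_max_sum_sub hX0 hXi hT l) ?_
  filter_upwards [ae_all_iff.mpr hX0] with ω hω
  have hsum := sum_le_sum_of_subset_of_nonneg (range_subset_range.mpr hkl) fun j _ _ => hω j
  exact max_le_max (by linarith) le_rfl

end ExpectedExcess

theorem g2_well_defined_continuous_strict_mono_general
    {Ω : Type*} [MeasurableSpace Ω] (P : Measure Ω)
    (α β₁ β₂ lam μ T₁ : ℝ) (hα : 0 < α) (hβ₂ : 0 < β₂)
    (hlam : 0 < lam) (hμ : 0 < μ) (hT₁ : 0 < T₁)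
    (X : ℕ → Ω → ℝ) (hmeas : ∀ i, Measurable (X i))
    (hdist : ∀ i, P.map (X i) = expMeasure μ)
    (g₂ : ℝ → ℝ)
    (hg₂ : ∀ p : ℝ, g₂ p = β₁ * T₁ + α * lam * p / (2 * μ) + β₂ *
      ∑' i : ℕ, (Real.exp (-(lam * p)) * (lam * p) ^ i / (Nat.factorial i : ℝ)) *
        ((1 / (i : ℝ)) * ∑ k ∈ Finset.Icc 1 i,
          ∫ ω, max (∑ j ∈ Finset.range k, X j ω - T₁) 0 ∂P)) :
    (∀ p ∈ Set.Ioc (0 : ℝ) 1,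
      Summable (fun i : ℕ =>
        (Real.exp (-(lam * p)) * (lam * p) ^ i / (Nat.factorial i : ℝ)) *
          ((1 / (i : ℝ)) * ∑ k ∈ Finset.Icc 1 i,
            ∫ ω, max (∑ j ∈ Finset.range k, X j ω - T₁) 0 ∂P))) ∧
    ContinuousOn g₂ (Set.Ioc 0 1) ∧ StrictMonoOn g₂ (Set.Ioc 0 1) := by
  set a : ℕ → ℝ := fun k => ∫ ω, max (∑ j ∈ Finset.range k, X j ω - T₁) 0 ∂P
  set m : ℝ := ∫ x, x ∂expMeasure μ with hm
  have hX0 j : 0 ≤ᵐ[P] X j := ae_nonneg_of_map_eq_expMeasure (hmeas j).aemeasurable (hdist j)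
  have hXi j : Integrable (X j) P :=
    integrable_of_map_eq_expMeasure hμ (hmeas j).aemeasurable (hdist j)
  have hmean j : ∫ ω, X j ω ∂P = m := by
    rw [hm, ← hdist j]
    exact (integral_map (hmeas j).aemeasurable aestronglyMeasurable_id).symm
  have ha : Monotone a := monotone_integral_max_sum_sub hX0 hXi hT₁.le
  have ha0 k : 0 ≤ a k := integral_nonneg fun ω => le_max_right _ _
  have hc i : |cesaroMean a i| ≤ m * 2 ^ i := by
    have hm0 : 0 ≤ m := hmean 0 ▸ integral_nonneg_of_ae (hX0 0)
    calc |cesaroMean a i| = cesaroMean a i := abs_of_nonneg (cesaroMean_nonneg ha0 i)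
      _ ≤ a i := cesaroMean_le_of_monotone ha (ha0 0) i
      _ ≤ i * m := by simpa [hmean] using integral_max_sum_sub_le hX0 hXi hT₁.le i
      _ ≤ m * 2 ^ i := by
        rw [mul_comm]; gcongr; exact_mod_cast (Nat.lt_two_pow_self).le
  have hg : g₂ = fun p => β₁ * T₁ + α * lam * p / (2 * μ) +
      β₂ * ∑' i, poissonWeight (lam * p) i * cesaroMean a i := funext hg₂
  refine ⟨fun p _ => (summable_norm_poissonWeight_mul hc _).of_norm, ?_, ?_⟩
  · rw [hg]
    have := (continuous_tsum_poissonWeight_mul hc).comp (continuous_const_mul lam)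
    exact Continuous.continuousOn (by fun_prop)
  · intro p hp q hq hpq
    have hmix := monotoneOn_tsum_poissonWeight_mul (monotone_cesaroMean ha (ha0 0)) hc
      (mul_nonneg hlam.le hp.1.le) (mul_nonneg hlam.le hq.1.le) (by gcongr)
    have hlin : α * lam * p / (2 * μ) < α * lam * q / (2 * μ) := by gcongr
    rw [hg]
    linarith [mul_le_mul_of_nonneg_left hmix hβ₂.le]

/-- The expected cost `g₂(p)` of arriving at opening time `−T₁` together with a Poisson(λp)
number of others is well-defined (the series converges), continuous and strictly increasing
in `p` on `(0, 1]`. -/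
theorem g2_well_defined_continuous_strict_mono
    {Ω : Type*} [MeasurableSpace Ω] (P : Measure Ω) [IsProbabilityMeasure P]
    (α β₁ β₂ lam μ T₁ : ℝ) (hα : 0 < α) (hβ₁ : 0 < β₁) (hβ₂ : 0 < β₂)
    (hlam : 0 < lam) (hμ : 0 < μ) (hT₁ : 0 < T₁)
    (X : ℕ → Ω → ℝ) (hmeas : ∀ i, Measurable (X i))
    (hindep : iIndepFun X P)
    (hdist : ∀ i, P.map (X i) = expMeasure μ)
    (g₂ : ℝ → ℝ)
    (hg₂ : ∀ p : ℝ, g₂ p = β₁ * T₁ + α * lam * p / (2 * μ) + β₂ *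
      ∑' i : ℕ, (Real.exp (-(lam * p)) * (lam * p) ^ i / (Nat.factorial i : ℝ)) *
        ((1 / (i : ℝ)) * ∑ k ∈ Finset.Icc 1 i,
          ∫ ω, max (∑ j ∈ Finset.range k, X j ω - T₁) 0 ∂P)) :
    (∀ p ∈ Set.Ioc (0 : ℝ) 1,
      Summable (fun i : ℕ =>
        (Real.exp (-(lam * p)) * (lam * p) ^ i / (Nat.factorial i : ℝ)) *
          ((1 / (i : ℝ)) * ∑ k ∈ Finset.Icc 1 i,
            ∫ ω, max (∑ j ∈ Finset.range k, X j ω - T₁) 0 ∂P))) ∧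
    ContinuousOn g₂ (Set.Ioc 0 1) ∧ StrictMonoOn g₂ (Set.Ioc 0 1) :=
  g2_well_defined_continuous_strict_mono_general P α β₁ β₂ lam μ T₁ hα hβ₂ hlam hμ hT₁ X hmeas hdist
    g₂ hg₂
end

section
/- Let β₁, β₂, μ, Λ, T₁ > 0 with T₁ < β₂Λ/((β₁+β₂)μ). Then p₁ := [β₂Λ² − T₁β₁Λμ + (1/2)√(−4T₁²β₂(α+β₂)Λ²μ² + (2β₂Λ² − 2T₁β₁Λμ)²)] / ((α+β₂)Λ²) is strictly decreasing as a function of T₁ on the interval where the discriminant is nonnegative, for any fixed α > 0. -/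
/-!
Below the threshold `β₂Λ / ((β₁ + β₂)μ)` the quantity `2β₂Λ² − 2T₁β₁Λμ` stays positive, so its
square decreases in `T₁`, while the subtracted term `4T₁²β₂(α + β₂)Λ²μ²` increases. Hence the
discriminant decreases, and with it the square root; the affine part of the numerator decreases too,
and the denominator is a positive constant.
-/

theorem two_mul_sub_pos_of_lt_div {β₁ β₂ μ Λ T : ℝ} (hβ₁ : 0 < β₁) (hβ₂ : 0 < β₂) (hμ : 0 < μ)
    (hΛ : 0 < Λ) (hT : 0 ≤ T) (hTlt : T < β₂ * Λ / ((β₁ + β₂) * μ)) :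
    0 < 2 * β₂ * Λ ^ 2 - 2 * T * β₁ * Λ * μ := by
  rw [lt_div_iff₀ (by positivity)] at hTlt
  nlinarith [mul_nonneg (mul_nonneg hT hβ₂.le) hμ.le]

/-- The atom size `p₁` at the opening time `−T₁` in the mixed equilibrium of the constrained
fluid model is strictly decreasing as a function of `T₁` on the set of effective opening times
where the discriminant is nonnegative. -/
theorem atom_size_strictly_decreasing
    (α β₁ β₂ μ Λ : ℝ) (hα : 0 < α) (hβ₁ : 0 < β₁) (hβ₂ : 0 < β₂) (hμ : 0 < μ) (hΛ : 0 < Λ) :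
    StrictAntiOn
      (fun T₁ : ℝ =>
        (β₂ * Λ ^ 2 - T₁ * β₁ * Λ * μ
          + (1 / 2) * Real.sqrt (-(4 * T₁ ^ 2 * β₂ * (α + β₂) * Λ ^ 2 * μ ^ 2)
              + (2 * β₂ * Λ ^ 2 - 2 * T₁ * β₁ * Λ * μ) ^ 2))
          / ((α + β₂) * Λ ^ 2))
      {T₁ : ℝ | 0 < T₁ ∧ T₁ < β₂ * Λ / ((β₁ + β₂) * μ) ∧
        0 ≤ -(4 * T₁ ^ 2 * β₂ * (α + β₂) * Λ ^ 2 * μ ^ 2)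
          + (2 * β₂ * Λ ^ 2 - 2 * T₁ * β₁ * Λ * μ) ^ 2} := by
  rintro a ⟨ha, -, -⟩ b ⟨hb, hbT, hbD⟩ hab
  have hslack := two_mul_sub_pos_of_lt_div hβ₁ hβ₂ hμ hΛ hb.le hbT
  dsimp only
  gcongr (?_ + _ * √?_) / _
  · gcongr
  · gcongr
end

section
/- Let α, β₁, β₂, μ, Λ > 0 and T₁ = A₁ := (−β₁ + √(β₁² − αβ₂ + β₂²))Λ/(β₂μ), assuming β₁² − αβ₂ + β₂² ≥ 0. Then the cost of arriving with everyone else at −T₁, namely β₁T₁ + αΛ/(2μ) + β₂μ(Λ/μ − T₁)²/(2Λ), equals the cost of the best deviation β₂(Λ/μ − T₁). Moreover, for T₁ < A₁ the former is strictly smaller (so the pure equilibrium at −T₁ holds). -/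
/-! Completing the square, the cost of joining the crowd at `−T` minus the cost of the best
deviation is `((β₂μT + β₁Λ)² − DΛ²) / (2β₂Λμ)` with `D = β₁² − αβ₂ + β₂²`. The threshold `A₁` is
exactly the `T` with `β₂μT + β₁Λ = √D · Λ`, so the difference vanishes there, and below it
`0 < β₂μT + β₁Λ < √D · Λ` makes the difference negative. -/

lemma herd_cost_sub_deviation_cost {α β₁ β₂ μ Λ : ℝ} (hβ₂ : β₂ ≠ 0) (hμ : μ ≠ 0) (hΛ : Λ ≠ 0)
    (T : ℝ) :
    β₁ * T + α * Λ / (2 * μ) + β₂ * μ * (Λ / μ - T) ^ 2 / (2 * Λ) - β₂ * (Λ / μ - T)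
      = ((β₂ * μ * T + β₁ * Λ) ^ 2 - (β₁ ^ 2 - α * β₂ + β₂ ^ 2) * Λ ^ 2)
          / (2 * β₂ * Λ * μ) := by
  field_simp
  ring

theorem pure_equilibrium_threshold_general
    (α β₁ β₂ μ Λ : ℝ) (hβ₁ : 0 < β₁) (hβ₂ : 0 < β₂) (hμ : 0 < μ) (hΛ : 0 < Λ)
    (hdisc : 0 ≤ β₁ ^ 2 - α * β₂ + β₂ ^ 2) :
    let A₁ : ℝ := (-β₁ + Real.sqrt (β₁ ^ 2 - α * β₂ + β₂ ^ 2)) * Λ / (β₂ * μ)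
    β₁ * A₁ + α * Λ / (2 * μ) + β₂ * μ * (Λ / μ - A₁) ^ 2 / (2 * Λ) = β₂ * (Λ / μ - A₁) ∧
    ∀ T₁ : ℝ, 0 < T₁ → T₁ < A₁ →
      β₁ * T₁ + α * Λ / (2 * μ) + β₂ * μ * (Λ / μ - T₁) ^ 2 / (2 * Λ)
        < β₂ * (Λ / μ - T₁) := by
  intro A₁
  set s := Real.sqrt (β₁ ^ 2 - α * β₂ + β₂ ^ 2)
  have hs : s ^ 2 = β₁ ^ 2 - α * β₂ + β₂ ^ 2 := Real.sq_sqrt hdisc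
  have hA₁ : β₂ * μ * A₁ + β₁ * Λ = s * Λ := by
    rw [show A₁ = (-β₁ + s) * Λ / (β₂ * μ) from rfl]
    field_simp
    ring
  have hdiff := herd_cost_sub_deviation_cost (α := α) (β₁ := β₁) hβ₂.ne' hμ.ne' hΛ.ne'
  constructor
  · rw [← sub_eq_zero, hdiff, hA₁, mul_pow, hs, sub_self, zero_div]
  · intro T hT hTA
    have hlt : β₂ * μ * T + β₁ * Λ < s * Λ := by
      rw [← hA₁]
      gcongr
    have hsq : (β₂ * μ * T + β₁ * Λ) ^ 2 < s ^ 2 * Λ ^ 2 := by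
      rw [← mul_pow]
      gcongr
    rw [← sub_neg, hdiff, ← hs]
    exact div_neg_of_neg_of_pos (by linarith) (by positivity)

/-- At `T₁ = A₁`, the cost of arriving with everyone else at `−T₁` equals the cost
`β₂(Λ/μ − T₁)` of the best deviation, and for `0 < T₁ < A₁` the former is strictly smaller
(so the pure equilibrium at `−T₁` holds). -/
theorem pure_equilibrium_threshold
    (α β₁ β₂ μ Λ : ℝ) (hα : 0 < α) (hβ₁ : 0 < β₁) (hβ₂ : 0 < β₂) (hμ : 0 < μ) (hΛ : 0 < Λ)
    (hdisc : 0 ≤ β₁ ^ 2 - α * β₂ + β₂ ^ 2) :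
    let A₁ : ℝ := (-β₁ + Real.sqrt (β₁ ^ 2 - α * β₂ + β₂ ^ 2)) * Λ / (β₂ * μ)
    β₁ * A₁ + α * Λ / (2 * μ) + β₂ * μ * (Λ / μ - A₁) ^ 2 / (2 * Λ) = β₂ * (Λ / μ - A₁) ∧
    ∀ T₁ : ℝ, 0 < T₁ → T₁ < A₁ →
      β₁ * T₁ + α * Λ / (2 * μ) + β₂ * μ * (Λ / μ - T₁) ^ 2 / (2 * Λ)
        < β₂ * (Λ / μ - T₁) :=
  pure_equilibrium_threshold_general α β₁ β₂ μ Λ hβ₁ hβ₂ hμ hΛ hdisc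
end

section
/- Let α, β₁, β₂, μ, Λ, T₁, T₂ > 0 with T₁ + T₂ < Λ/μ. The equilibrium social cost in the mixed cases, Λ(T₂β₂ + (α+β₂)(Λ/μ − T₁ − T₂)), is strictly greater than the socially optimal cost (1/2)(T₁²β₁μ + T₂²β₂μ + 2β₂T₂(Λ − (T₁+T₂)μ) + (α+β₂)(Λ − (T₁+T₂)μ)²/μ) whenever T₁ > 0. -/
/-!
Write `m = Λ - (T₁ + T₂)μ` for the atom at `T₂`. Multiplied by `2μ`, the gap between the
two costs becomes `2T₁T₂β₂μ² + T₂²β₂μ² + (α + β₂)m(m + 2(T₁ + T₂)μ) - T₁²β₁μ²`, whose only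
negative term is `T₁²β₁μ²`. The case condition on `T₁` says exactly that
`β₁T₁μ ≤ (α + β₂)m + β₂T₂μ`; multiplied by `T₁μ` it bounds that term by part of the positive ones.
-/

namespace FluidQueue

lemma atom_pos {μ Λ T₁ T₂ : ℝ} (hμ : 0 < μ) (hwindow : T₁ + T₂ < Λ / μ) :
    0 < Λ - (T₁ + T₂) * μ := by
  have := (lt_div_iff₀ hμ).mp hwindow
  linarith

lemma two_mul_cost_gap_eq (α β₁ β₂ Λ T₁ T₂ : ℝ) {μ : ℝ} (hμ : μ ≠ 0) :
    2 * μ * (Λ * (T₂ * β₂ + (α + β₂) * (Λ / μ - T₁ - T₂))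
      - (1 / 2) * (T₁ ^ 2 * β₁ * μ + T₂ ^ 2 * β₂ * μ
          + 2 * β₂ * T₂ * (Λ - (T₁ + T₂) * μ)
          + (α + β₂) * (Λ - (T₁ + T₂) * μ) ^ 2 / μ))
      = 2 * T₁ * T₂ * β₂ * μ ^ 2 + T₂ ^ 2 * β₂ * μ ^ 2
        + (α + β₂) * (Λ - (T₁ + T₂) * μ) * (Λ - (T₁ + T₂) * μ + 2 * (T₁ + T₂) * μ)
        - T₁ ^ 2 * β₁ * μ ^ 2 := by
  field_simp
  ring

lemma early_cost_le_of_case {α β₁ β₂ μ Λ T₁ T₂ : ℝ} (hd : 0 < (α + β₁ + β₂) * μ)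
    (hcase : T₁ ≤ (α * Λ + β₂ * Λ - T₂ * α * μ) / ((α + β₁ + β₂) * μ)) :
    β₁ * T₁ * μ ≤ (α + β₂) * (Λ - (T₁ + T₂) * μ) + β₂ * T₂ * μ := by
  have := (le_div_iff₀ hd).mp hcase
  linarith

lemma cost_gap_polynomial_pos {α β₁ β₂ μ T₁ T₂ m : ℝ} (hα : 0 < α) (hβ₂ : 0 < β₂)
    (hμ : 0 < μ) (hT₁ : 0 < T₁) (hT₂ : 0 < T₂) (hm : 0 < m)
    (hearly : β₁ * T₁ * μ ≤ (α + β₂) * m + β₂ * T₂ * μ) :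
    0 < 2 * T₁ * T₂ * β₂ * μ ^ 2 + T₂ ^ 2 * β₂ * μ ^ 2
      + (α + β₂) * m * (m + 2 * (T₁ + T₂) * μ) - T₁ ^ 2 * β₁ * μ ^ 2 := by
  have hT₁μ : 0 ≤ T₁ * μ := by positivity
  have hbound : T₁ ^ 2 * β₁ * μ ^ 2 ≤ T₁ * μ * ((α + β₂) * m + β₂ * T₂ * μ) := by
    calc T₁ ^ 2 * β₁ * μ ^ 2 = T₁ * μ * (β₁ * T₁ * μ) := by ring
      _ ≤ T₁ * μ * ((α + β₂) * m + β₂ * T₂ * μ) := mul_le_mul_of_nonneg_left hearly hT₁μ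
  have hrest : 0 < T₁ * T₂ * β₂ * μ ^ 2 + T₂ ^ 2 * β₂ * μ ^ 2
      + (α + β₂) * m * (m + T₁ * μ + 2 * T₂ * μ) := by positivity
  linarith

end FluidQueue

open FluidQueue in
theorem equilibrium_cost_exceeds_optimal_both_constraints_general
    (α β₁ β₂ μ Λ T₁ T₂ : ℝ) (hα : 0 < α) (hβ₁ : 0 < β₁) (hβ₂ : 0 < β₂) (hμ : 0 < μ)
    (hT₁ : 0 < T₁) (hT₂ : 0 < T₂) (hwindow : T₁ + T₂ < Λ / μ)
    (hcase : T₁ ≤ (α * Λ + β₂ * Λ - T₂ * α * μ) / ((α + β₁ + β₂) * μ)) :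
    Λ * (T₂ * β₂ + (α + β₂) * (Λ / μ - T₁ - T₂))
      > (1 / 2) * (T₁ ^ 2 * β₁ * μ + T₂ ^ 2 * β₂ * μ
          + 2 * β₂ * T₂ * (Λ - (T₁ + T₂) * μ)
          + (α + β₂) * (Λ - (T₁ + T₂) * μ) ^ 2 / μ) := by
  have hearly := early_cost_le_of_case (by positivity) hcase
  have hgap := cost_gap_polynomial_pos hα hβ₂ hμ hT₁ hT₂ (atom_pos hμ hwindow) hearly
  rw [← two_mul_cost_gap_eq α β₁ β₂ Λ T₁ T₂ hμ.ne'] at hgap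
  have := pos_of_mul_pos_right hgap (by positivity)
  linarith

/-- When both the opening time `−T₁` and closing time `T₂` are effective
(`T₁ + T₂ < Λ/μ`), and the socially optimal strategy is the uniform-plus-atom one
(`T₁ ≤ (αΛ + β₂Λ − T₂αμ)/((α+β₁+β₂)μ)`), the equilibrium social cost in the mixed cases
strictly exceeds the socially optimal cost whenever `T₁ > 0`. -/
theorem equilibrium_cost_exceeds_optimal_both_constraints
    (α β₁ β₂ μ Λ T₁ T₂ : ℝ) (hα : 0 < α) (hβ₁ : 0 < β₁) (hβ₂ : 0 < β₂) (hμ : 0 < μ)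
    (hΛ : 0 < Λ) (hT₁ : 0 < T₁) (hT₂ : 0 < T₂) (hwindow : T₁ + T₂ < Λ / μ)
    (hcase : T₁ ≤ (α * Λ + β₂ * Λ - T₂ * α * μ) / ((α + β₁ + β₂) * μ)) :
    Λ * (T₂ * β₂ + (α + β₂) * (Λ / μ - T₁ - T₂))
      > (1 / 2) * (T₁ ^ 2 * β₁ * μ + T₂ ^ 2 * β₂ * μ
          + 2 * β₂ * T₂ * (Λ - (T₁ + T₂) * μ)
          + (α + β₂) * (Λ - (T₁ + T₂) * μ) ^ 2 / μ) :=
  equilibrium_cost_exceeds_optimal_both_constraints_general α β₁ β₂ μ Λ T₁ T₂ hα hβ₁ hβ₂ hμ hT₁ hT₂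
    hwindow hcase
end
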